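/- For every controlled Markov process and every finite horizon T ≥ 1, the set of marginal state distributions induced by non-Markovian policies equals the set induced by Markovian policies: {d_T^π : π non-Markovian} = {d_T^π : π Markovian}, where d_T^π(s) = (1/T) Σ_{t=0}^{T−1} d_t^π(s). -/

import Mathlib

open scoped BigOperators

/-- A controlled Markov process over finite state space `S` and action space `A`:
a transition kernel `P` and an initial distribution `μ`. -/
structure CMP (S A : Type) [Fintype S] [Fintype A] where
  P : S → A → S → ℝ
  P_nonneg : ∀ s a s', 0 ≤ P s a s'
  P_sum_one : ∀ s a, ∑ s', P s a s' = 1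
  μ : S → ℝ
  μ_nonneg : ∀ s, 0 ≤ μ s
  μ_sum_one : ∑ s, μ s = 1

/-- A history of `t` steps: states `s_0, …, s_t` and actions `a_0, …, a_{t-1}`. -/
abbrev Hist (S A : Type) (t : ℕ) : Type := (Fin (t + 1) → S) × (Fin t → A)

/-- A continuation of `k` further steps: actions `a_0, …, a_{k-1}` together with the
states those actions lead to. -/
abbrev Contin (S A : Type) (k : ℕ) : Type := (Fin k → A) × (Fin k → S)

/-- A general (possibly non-Markovian, possibly randomized) policy: for every time `t`
and history of length `t`, a probability distribution over actions. -/
structure Policy (S A : Type) [Fintype A] where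
  p : ∀ t : ℕ, Hist S A t → A → ℝ
  nonneg : ∀ t h a, 0 ≤ p t h a
  sum_one : ∀ t h, ∑ a, p t h a = 1

/-- A Markovian (randomized, time-dependent) policy: for every time `t` and current
state `s`, a probability distribution over actions. -/
structure MPolicy (S A : Type) [Fintype A] where
  p : ℕ → S → A → ℝ
  nonneg : ∀ t s a, 0 ≤ p t s a
  sum_one : ∀ t s, ∑ a, p t s a = 1

/-- The last (current) state of a history. -/
def lastState {S A : Type} {t : ℕ} (h : Hist S A t) : S := h.1 (Fin.last t)

/-- A Markovian policy viewed as a general policy. -/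
def MPolicy.toPolicy {S A : Type} [Fintype A] (m : MPolicy S A) : Policy S A where
  p := fun t h a => m.p t (lastState h) a
  nonneg := fun t h a => m.nonneg t _ a
  sum_one := fun t h => m.sum_one t _

/-- The general policy induced by a deterministic non-Markovian policy
(a function from histories to actions). -/
def detPolicy {S A : Type} [Fintype A] [DecidableEq A] (f : ∀ t : ℕ, Hist S A t → A) :
    Policy S A where
  p := fun t h a => if a = f t h then 1 else 0
  nonneg := by intro t h a; (try dsimp only); split <;> norm_num
  sum_one := by intro t h; simp

/-- The length-`i` prefix of a history. -/
def histTake {S A : Type} {t : ℕ} (h : Hist S A t) (i : ℕ) (hi : i ≤ t) : Hist S A i :=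
  (fun j => h.1 ⟨(j : ℕ), by have := j.isLt; omega⟩,
   fun j => h.2 ⟨(j : ℕ), by have := j.isLt; omega⟩)

/-- The probability that policy `π` generates the history `h` when interacting with
the CMP `M` (initial state from `μ`, actions from `π`, transitions from `P`). -/
noncomputable def histProb {S A : Type} [Fintype S] [Fintype A]
    (M : CMP S A) (π : Policy S A) {t : ℕ} (h : Hist S A t) : ℝ :=
  M.μ (h.1 0) * ∏ i : Fin t,
    (π.p i (histTake h i (Nat.le_of_lt i.isLt)) (h.2 i) *
      M.P (h.1 i.castSucc) (h.2 i) (h.1 i.succ))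

/-- The `t`-step state distribution `d_t^π(s) = Pr(s_t = s)`. -/
noncomputable def stateDist {S A : Type} [Fintype S] [Fintype A] [DecidableEq S]
    (M : CMP S A) (π : Policy S A) (t : ℕ) (s : S) : ℝ :=
  ∑ h : Hist S A t, if lastState h = s then histProb M π h else 0

/-- Shannon entropy of a distribution on a finite set (`0 log 0 = 0` since `Real.log 0 = 0`). -/
noncomputable def entropy {S : Type} [Fintype S] (d : S → ℝ) : ℝ :=
  -∑ s, d s * Real.log (d s)

/-- The state visitation frequency of a trajectory with `n+1` states. -/
noncomputable def visitFreq {S A : Type} [Fintype S] [DecidableEq S] {n : ℕ}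
    (h : Hist S A n) (s : S) : ℝ :=
  (∑ i : Fin (n + 1), if h.1 i = s then (1 : ℝ) else 0) / ((n : ℝ) + 1)

/-- The marginal state distribution `d_T^π(s) = (1/T) ∑_{t<T} d_t^π(s)`. -/
noncomputable def marginalDist {S A : Type} [Fintype S] [Fintype A] [DecidableEq S]
    (M : CMP S A) (π : Policy S A) (T : ℕ) (s : S) : ℝ :=
  (1 / (T : ℝ)) * ∑ t ∈ Finset.range T, stateDist M π t s

/-- The `γ`-discounted state distribution `d_γ^π(s) = (1-γ) ∑_t γ^t d_t^π(s)`. -/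
noncomputable def discountedDist {S A : Type} [Fintype S] [Fintype A] [DecidableEq S]
    (M : CMP S A) (π : Policy S A) (γ : ℝ) (s : S) : ℝ :=
  (1 - γ) * ∑' t : ℕ, γ ^ t * stateDist M π t s

/-- Concatenation of a length-`t` history with a `k`-step continuation. -/
def histAppend {S A : Type} {t k : ℕ} (h : Hist S A t) (c : Contin S A k) : Hist S A (t + k) :=
  (fun j => if hj : (j : ℕ) ≤ t then h.1 ⟨(j : ℕ), by omega⟩
            else c.2 ⟨(j : ℕ) - t - 1, by have := j.isLt; omega⟩,
   fun j => if hj : (j : ℕ) < t then h.2 ⟨(j : ℕ), hj⟩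
            else c.1 ⟨(j : ℕ) - t, by have := j.isLt; omega⟩)

/-- The probability that, after the prefix history `h`, running `π` (conditioned on the
full history) produces the `k`-step continuation `c`. -/
noncomputable def contProb {S A : Type} [Fintype S] [Fintype A]
    (M : CMP S A) (π : Policy S A) {t k : ℕ} (h : Hist S A t) (c : Contin S A k) : ℝ :=
  ∏ i : Fin k,
    (π.p (t + (i : ℕ))
        (histTake (histAppend h c) (t + (i : ℕ)) (by have := i.isLt; omega))
        ((histAppend h c).2 ⟨t + (i : ℕ), by have := i.isLt; omega⟩) *
      M.P ((histAppend h c).1 ⟨t + (i : ℕ), by have := i.isLt; omega⟩)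
        ((histAppend h c).2 ⟨t + (i : ℕ), by have := i.isLt; omega⟩)
        ((histAppend h c).1 ⟨t + (i : ℕ) + 1, by have := i.isLt; omega⟩))

/-- The expected entropy of the state visitation frequency of the completed trajectory,
when running `π` for `k` further steps after the prefix history `h`. -/
noncomputable def expEntFrom {S A : Type} [Fintype S] [Fintype A] [DecidableEq S]
    (M : CMP S A) (π : Policy S A) {t : ℕ} (k : ℕ) (h : Hist S A t) : ℝ :=
  ∑ c : Contin S A k, contProb M π h c * entropy (visitFreq (histAppend h c))

/-- A history has positive probability (under some policy) iff its initial state and all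
its transitions have positive probability. -/
def Reachable {S A : Type} [Fintype S] [Fintype A] (M : CMP S A) {t : ℕ}
    (h : Hist S A t) : Prop :=
  0 < M.μ (h.1 0) ∧ ∀ i : Fin t, 0 < M.P (h.1 i.castSucc) (h.2 i) (h.1 i.succ)

/-! Given any policy `π`, let the Markovian policy play at time `t` in state `s` the conditional
law of `a_t` given `s_t = s` under `π`. By induction on `t` both policies have the same `d_t`:
if they agree at time `t`, they also agree on the joint law of `(s_t, a_t)`, and `d_{t+1}` is
obtained from that joint law through the kernel `P`. Averaging over `t < T` gives the claim. -/

open Finset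

section Histories

variable {S A : Type}

def histSnoc {t : ℕ} (h : Hist S A t) (a : A) (s' : S) : Hist S A (t + 1) :=
  (Fin.snoc h.1 s', Fin.snoc h.2 a)

@[simp]
lemma lastState_histSnoc {t : ℕ} (h : Hist S A t) (a : A) (s' : S) :
    lastState (histSnoc h a s') = s' := by
  simp [lastState, histSnoc]

@[simp]
lemma histSnoc_fst_castSucc {t : ℕ} (h : Hist S A t) (a : A) (s' : S) (i : Fin (t + 1)) :
    (histSnoc h a s').1 i.castSucc = h.1 i := by
  simp [histSnoc]

@[simp]
lemma histSnoc_snd_castSucc {t : ℕ} (h : Hist S A t) (a : A) (s' : S) (i : Fin t) :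
    (histSnoc h a s').2 i.castSucc = h.2 i := by
  simp [histSnoc]

@[simp]
lemma histSnoc_fst_zero {t : ℕ} (h : Hist S A t) (a : A) (s' : S) :
    (histSnoc h a s').1 0 = h.1 0 := by
  simp [histSnoc]

@[simp]
lemma histSnoc_fst_last {t : ℕ} (h : Hist S A t) (a : A) (s' : S) :
    (histSnoc h a s').1 (Fin.last (t + 1)) = s' := by
  simp [histSnoc]

@[simp]
lemma histSnoc_snd_last {t : ℕ} (h : Hist S A t) (a : A) (s' : S) :
    (histSnoc h a s').2 (Fin.last t) = a := by
  simp [histSnoc]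

@[simp]
lemma histTake_histSnoc {t : ℕ} (h : Hist S A t) (a : A) (s' : S) (i : ℕ) (hi : i ≤ t) :
    histTake (histSnoc h a s') i (hi.trans t.le_succ) = histTake h i hi := by
  ext j
  · simp [histTake, histSnoc, Fin.snoc, show (j : ℕ) ≤ t by omega]
  · simp [histTake, histSnoc, Fin.snoc, show (j : ℕ) < t by omega]

@[simp]
lemma histTake_self {t : ℕ} (h : Hist S A t) : histTake h t le_rfl = h := rfl

def histSnocEquiv (S A : Type) (t : ℕ) : Hist S A t × A × S ≃ Hist S A (t + 1) where
  toFun x := histSnoc x.1 x.2.1 x.2.2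
  invFun H := ((Fin.init H.1, Fin.init H.2), H.2 (Fin.last t), H.1 (Fin.last (t + 1)))
  left_inv := by
    rintro ⟨⟨f, g⟩, a, s⟩
    simp [histSnoc]
  right_inv := by
    rintro ⟨f, g⟩
    simp [histSnoc, Fin.snoc_init_self]

end Histories

section Distributions

variable {S A : Type} [Fintype S] [Fintype A] (M : CMP S A)

lemma histProb_nonneg (π : Policy S A) {t : ℕ} (h : Hist S A t) : 0 ≤ histProb M π h :=
  mul_nonneg (M.μ_nonneg _) <| prod_nonneg fun _ _ =>
    mul_nonneg (π.nonneg _ _ _) (M.P_nonneg _ _ _)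

lemma histProb_histSnoc (π : Policy S A) {t : ℕ} (h : Hist S A t) (a : A) (s' : S) :
    histProb M π (histSnoc h a s')
      = histProb M π h * (π.p t h a * M.P (lastState h) a s') := by
  rw [histProb, histProb, Fin.prod_univ_castSucc]
  simp [-Fin.castSucc_succ, Fin.succ_castSucc, lastState, mul_assoc]

variable [DecidableEq S]

lemma stateDist_nonneg (π : Policy S A) (t : ℕ) (s : S) : 0 ≤ stateDist M π t s :=
  sum_nonneg fun h _ => ite_nonneg (histProb_nonneg M π h) le_rfl

lemma stateDist_zero_eq (π π' : Policy S A) : stateDist M π 0 = stateDist M π' 0 := by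
  ext s
  simp [stateDist, histProb]

noncomputable def stateActionDist (π : Policy S A) (t : ℕ) (s : S) (a : A) : ℝ :=
  ∑ h : Hist S A t, if lastState h = s then histProb M π h * π.p t h a else 0

lemma stateActionDist_nonneg (π : Policy S A) (t : ℕ) (s : S) (a : A) :
    0 ≤ stateActionDist M π t s a :=
  sum_nonneg fun h _ => ite_nonneg (mul_nonneg (histProb_nonneg M π h) (π.nonneg ..)) le_rfl

lemma sum_stateActionDist (π : Policy S A) (t : ℕ) (s : S) :
    ∑ a, stateActionDist M π t s a = stateDist M π t s := by
  simp only [stateActionDist]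
  rw [sum_comm]
  refine sum_congr rfl fun h _ => ?_
  split_ifs <;> simp [← mul_sum, π.sum_one]

lemma stateDist_succ (π : Policy S A) (t : ℕ) (s' : S) :
    stateDist M π (t + 1) s' = ∑ s, ∑ a, stateActionDist M π t s a * M.P s a s' := by
  have lhs : stateDist M π (t + 1) s'
      = ∑ h : Hist S A t, ∑ a, histProb M π h * (π.p t h a * M.P (lastState h) a s') := by
    rw [stateDist, ← (histSnocEquiv S A t).sum_comp]
    simp [Fintype.sum_prod_type, histSnocEquiv, histProb_histSnoc]
  have rhs : ∑ s, ∑ a, stateActionDist M π t s a * M.P s a s'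
      = ∑ h : Hist S A t, ∑ a, histProb M π h * (π.p t h a * M.P (lastState h) a s') := by
    simp only [stateActionDist, sum_mul, ite_mul, zero_mul, mul_assoc]
    rw [sum_comm]
    simp only [sum_comm (γ := S), sum_ite_eq, mem_univ, if_true]
    exact sum_comm
  rw [lhs, rhs]

lemma stateActionDist_toPolicy (m : MPolicy S A) (t : ℕ) (s : S) (a : A) :
    stateActionDist M m.toPolicy t s a = m.p t s a * stateDist M m.toPolicy t s := by
  simp only [stateActionDist, stateDist, mul_sum]
  refine sum_congr rfl fun h _ => ?_
  split_ifs with hs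
  · simp [MPolicy.toPolicy, hs, mul_comm]
  · simp

lemma stateActionDist_eq_zero_of_stateDist_eq_zero {π : Policy S A} {t : ℕ} {s : S}
    (hs : stateDist M π t s = 0) (a : A) : stateActionDist M π t s a = 0 := by
  rw [← sum_stateActionDist] at hs
  exact (sum_eq_zero_iff_of_nonneg fun a _ => stateActionDist_nonneg M π t s a).mp hs a
    (mem_univ a)

/-- Plays `Pr(a_t = a | s_t = s)` under `π`; off the support of `d_t^π` any action
distribution would do. -/
noncomputable def markovianize (π : Policy S A) : MPolicy S A where
  p t s a := if stateDist M π t s = 0 then π.p 0 (fun _ => s, Fin.elim0) a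
    else stateActionDist M π t s a / stateDist M π t s
  nonneg t s a := by
    split_ifs
    · exact π.nonneg ..
    · exact div_nonneg (stateActionDist_nonneg ..) (stateDist_nonneg ..)
  sum_one t s := by
    split_ifs with hs
    · exact π.sum_one ..
    · rw [← sum_div, sum_stateActionDist, div_self hs]

lemma stateActionDist_markovianize_of_stateDist_eq (π : Policy S A) {t : ℕ}
    (ht : stateDist M (markovianize M π).toPolicy t = stateDist M π t) (s : S) (a : A) :
    stateActionDist M (markovianize M π).toPolicy t s a = stateActionDist M π t s a := by
  rw [stateActionDist_toPolicy, ht]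
  by_cases hs : stateDist M π t s = 0
  · rw [hs, mul_zero, stateActionDist_eq_zero_of_stateDist_eq_zero M hs]
  · simp only [markovianize, hs, if_false, div_mul_cancel₀ _ hs]

lemma stateDist_markovianize (π : Policy S A) (t : ℕ) :
    stateDist M (markovianize M π).toPolicy t = stateDist M π t := by
  induction t with
  | zero => exact stateDist_zero_eq M _ π
  | succ t ih =>
    ext s'
    simp only [stateDist_succ, stateActionDist_markovianize_of_stateDist_eq M π ih]

end Distributions

theorem marginal_state_distributions_eq_general
    {S A : Type} [Fintype S] [Fintype A] [DecidableEq S]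
    (M : CMP S A) (T : ℕ) :
    {f : S → ℝ | ∃ π : Policy S A, f = fun s => marginalDist M π T s}
      = {f : S → ℝ | ∃ π' : MPolicy S A, f = fun s => marginalDist M π'.toPolicy T s} := by
  ext f
  constructor
  · rintro ⟨π, rfl⟩
    refine ⟨markovianize M π, ?_⟩
    simp only [marginalDist, stateDist_markovianize]
  · rintro ⟨π', rfl⟩
    exact ⟨π'.toPolicy, rfl⟩

/-- for every finite horizon `T ≥ 1`, the set of marginal state
distributions induced by non-Markovian policies equals the set induced by Markovian
policies. -/
theorem marginal_state_distributions_eq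
    {S A : Type} [Fintype S] [Fintype A] [Nonempty S] [Nonempty A] [DecidableEq S]
    (M : CMP S A) (T : ℕ) (hT : 1 ≤ T) :
    {f : S → ℝ | ∃ π : Policy S A, f = fun s => marginalDist M π T s}
      = {f : S → ℝ | ∃ π' : MPolicy S A, f = fun s => marginalDist M π'.toPolicy T s} :=
  marginal_state_distributions_eq_general M T
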